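/- The plane {(a, (a+c)/√2, c) : a, c ∈ ℝ}, i.e. the set where z₂ = (z₁ + z₃)/√2, is an invariant manifold of the three-dimensional linear model: for all γ₁, γ₂ > 0, if z = (z₁, z₂, z₃) solves the three-dimensional linear model and z₂(t₀) = (z₁(t₀) + z₃(t₀))/√2 for some t₀, then z₂(t) = (z₁(t) + z₃(t))/√2 for all t ∈ ℝ. -/

import Mathlib

open Real

/-! The plane is the zero set of `w = √2 z₂ - (z₁ + z₃)`, and along any solution of the model
`w' = -(1 + γ₁) w`. Hence `exp ((1 + γ₁) t) w t` is constant, so `w` vanishes everywhere as soon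
as it vanishes at `t₀`. -/

theorem exp_neg_mul_smul_eq_of_hasDerivAt_smul {E : Type*} [NormedAddCommGroup E]
    [NormedSpace ℝ E] {f : ℝ → E} {c : ℝ} (hf : ∀ t, HasDerivAt f (c • f t) t) (s t : ℝ) :
    exp (-c * t) • f t = exp (-c * s) • f s := by
  have hderiv : ∀ t, HasDerivAt (fun t => exp (-c * t) • f t) 0 t := fun t => by
    have he : HasDerivAt (fun t => exp (-c * t)) (exp (-c * t) * -c) t := by
      simpa using ((hasDerivAt_id t).const_mul (-c)).exp
    refine (he.smul (hf t)).congr_deriv ?_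
    rw [smul_smul, ← add_smul, mul_neg, mul_comm, add_neg_cancel, zero_smul]
  exact is_const_of_deriv_eq_zero (fun t => (hderiv t).differentiableAt)
    (fun t => (hderiv t).deriv) t s

theorem eq_zero_of_hasDerivAt_smul {E : Type*} [NormedAddCommGroup E] [NormedSpace ℝ E]
    {f : ℝ → E} {c t₀ : ℝ} (hf : ∀ t, HasDerivAt f (c • f t) t) (h₀ : f t₀ = 0) (t : ℝ) :
    f t = 0 := by
  have := exp_neg_mul_smul_eq_of_hasDerivAt_smul hf t₀ t
  rwa [h₀, smul_zero, smul_eq_zero_iff_right (exp_pos _).ne'] at this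

theorem linearModel_deriv_normal_eq (γ₁ γ₂ a b c : ℝ) :
    √2 * ((√2 * γ₁ / 4) * a - (1 + γ₁ / 2) * b + (√2 * γ₁ / 4) * c)
      - ((-1 - γ₁ / 4 - γ₂ / 2) * a + (√2 * γ₁ / 4) * b + (γ₂ / 2 - γ₁ / 4) * c
        + ((-γ₁ / 4 + γ₂ / 2) * a + (√2 * γ₁ / 4) * b - (1 + γ₁ / 4 + γ₂ / 2) * c))
      = -(1 + γ₁) * (√2 * b - (a + c)) := by
  linear_combination (γ₁ / 4 * (a + c)) * Real.mul_self_sqrt (zero_le_two : (0:ℝ) ≤ 2)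

theorem stmt13 (γ₁ γ₂ : ℝ) (z₁ z₂ z₃ : ℝ → ℝ)
    (hz : ∀ t : ℝ,
      HasDerivAt z₁
        ((-1 - γ₁ / 4 - γ₂ / 2) * z₁ t + (Real.sqrt 2 * γ₁ / 4) * z₂ t
          + (γ₂ / 2 - γ₁ / 4) * z₃ t) t ∧
      HasDerivAt z₂
        ((Real.sqrt 2 * γ₁ / 4) * z₁ t - (1 + γ₁ / 2) * z₂ t
          + (Real.sqrt 2 * γ₁ / 4) * z₃ t) t ∧
      HasDerivAt z₃
        ((-γ₁ / 4 + γ₂ / 2) * z₁ t + (Real.sqrt 2 * γ₁ / 4) * z₂ t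
          - (1 + γ₁ / 4 + γ₂ / 2) * z₃ t) t)
    (t₀ : ℝ) (h₀ : z₂ t₀ = (z₁ t₀ + z₃ t₀) / Real.sqrt 2) :
    ∀ t : ℝ, z₂ t = (z₁ t + z₃ t) / Real.sqrt 2 := by
  have hsqrt : √2 ≠ 0 := by positivity
  set w : ℝ → ℝ := fun t => √2 * z₂ t - (z₁ t + z₃ t)
  have hw : ∀ t, HasDerivAt w (-(1 + γ₁) • w t) t := fun t => by
    obtain ⟨h₁, h₂, h₃⟩ := hz t
    rw [smul_eq_mul, ← linearModel_deriv_normal_eq γ₁ γ₂]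
    exact (h₂.const_mul √2).sub (h₁.add h₃)
  have hw₀ : w t₀ = 0 := by
    simp only [w, h₀, mul_div_cancel₀ _ hsqrt, sub_self]
  intro t
  rw [eq_div_iff hsqrt, mul_comm, ← sub_eq_zero]
  exact eq_zero_of_hasDerivAt_smul hw hw₀ t
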